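/- arXiv:1811.11981 — 4 statements merged into one kernel-verified Lean document; each statement's English description precedes it below -/
import Mathlib

section
/- If X1, ..., Xn are random variables with distributions F1, ..., Fn respectively, then the distribution of X1 + ... + Xn is dominated in convex order by the distribution F1 ⊕ ... ⊕ Fn, i.e., the distribution whose quantile function is the sum of the quantile functions of F1, ..., Fn. -/
open MeasureTheory ProbabilityTheory Set

/-- The uniform distribution on `[a, b]`. -/
noncomputable def unif (a b : ℝ) : Measure ℝ :=
  (ENNReal.ofReal (b - a))⁻¹ • (volume.restrict (Set.Icc a b))

/-- `F` is smaller than `G` in convex order. -/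
def ConvexOrder (F G : Measure ℝ) : Prop :=
  ∀ φ : ℝ → ℝ, ConvexOn ℝ Set.univ φ → Integrable φ F → Integrable φ G →
    ∫ x, φ x ∂F ≤ ∫ x, φ x ∂G

/-- The set of possible distributions of `X 1 + ... + X n` with `X i ~ Fs i`. -/
def Dset (n : ℕ) (Fs : Fin n → Measure ℝ) : Set (Measure ℝ) :=
  {G | ∃ (Ω : Type) (_ : MeasureSpace Ω),
    IsProbabilityMeasure (ℙ : Measure Ω) ∧
    ∃ X : Fin n → Ω → ℝ, (∀ i, Measurable (X i)) ∧
      (∀ i, Measure.map (X i) ℙ = Fs i) ∧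
      Measure.map (fun ω => ∑ i, X i ω) ℙ = G}

/-- The quantile (left-continuous inverse cdf) of a distribution. -/
noncomputable def quantile (F : Measure ℝ) (t : ℝ) : ℝ :=
  sInf {x : ℝ | t ≤ (F (Set.Iic x)).toReal}

/-- `F` is the distribution of `X + Y` for some `X ~ μ`, `Y ~ ν`. -/
def IsSumDist (μ ν F : Measure ℝ) : Prop :=
  ∃ (Ω : Type) (_ : MeasureSpace Ω), IsProbabilityMeasure (ℙ : Measure Ω) ∧
    ∃ X Y : Ω → ℝ, Measurable X ∧ Measurable Y ∧
      Measure.map X ℙ = μ ∧ Measure.map Y ℙ = ν ∧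
      Measure.map (fun ω => X ω + Y ω) ℙ = F

/-! Let `q i` be the quantile function of `Fs i`. On `(0, 1)` with Lebesgue measure the `q i` have
laws `Fs i` and are all nondecreasing, i.e. the vector `(q i)` is comonotone.

Both sums have the same mean, so it suffices to compare stop-loss transforms `E (S - a)₊`: up to an
affine function, a convex `φ` is the mixture of the hinges `(x - s)₊` (`s > 0`) and `(s - x)₊`
(`s ≤ 0`) against the Stieltjes measure of its right derivative, and the lower hinges are
expressed through the upper ones and the mean.

For any `d` with `∑ d i = a` one has `(∑ X i - a)₊ ≤ ∑ (X i - d i)₊`, whose expectation only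
depends on the marginals. Cutting every `q i` at the level where `∑ q i` crosses `a` produces a `d`
for which this is an equality on the comonotone side. -/

open Filter Topology

instance isProbabilityMeasure_volume_restrict_Ioo_zero_one :
    IsProbabilityMeasure (volume.restrict (Ioo (0 : ℝ) 1)) :=
  ⟨by simp⟩

section Quantile

variable {F : Measure ℝ} [IsProbabilityMeasure F] {t x : ℝ}

theorem quantile_eq_sInf_cdf : quantile F t = sInf {y | t ≤ cdf F y} := by
  simp [quantile, cdf_eq_real, measureReal_def]

theorem quantile_le_iff (ht₀ : 0 < t) (ht₁ : t < 1) : quantile F t ≤ x ↔ t ≤ cdf F x := by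
  rw [quantile_eq_sInf_cdf]
  have hne : {y | t ≤ cdf F y}.Nonempty :=
    ((tendsto_cdf_atTop F).eventually (lt_mem_nhds ht₁)).exists.imp fun _ h => h.le
  obtain ⟨x₀, hx₀⟩ := eventually_atBot.1 ((tendsto_cdf_atBot F).eventually (gt_mem_nhds ht₀))
  have hbdd : BddBelow {y | t ≤ cdf F y} :=
    ⟨x₀, fun y hy => le_of_not_gt fun hlt => (hy.trans_lt (hx₀ y hlt.le)).false⟩
  refine ⟨fun h => ?_, fun h => csInf_le hbdd h⟩
  have hmem : t ≤ cdf F (sInf {y | t ≤ cdf F y}) := by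
    refine ge_of_tendsto (((cdf F).right_continuous _).mono Ioi_subset_Ici_self) ?_
    filter_upwards [self_mem_nhdsWithin] with y hy
    obtain ⟨z, hz, hzy⟩ := exists_lt_of_csInf_lt hne hy
    exact hz.trans (monotone_cdf F hzy.le)
  exact hmem.trans (monotone_cdf F h)

theorem monotoneOn_quantile : MonotoneOn (quantile F) (Ioo 0 1) := fun _ hu _ hv huv =>
  (quantile_le_iff hu.1 hu.2).2 (huv.trans ((quantile_le_iff hv.1 hv.2).1 le_rfl))

theorem aemeasurable_quantile : AEMeasurable (quantile F) (volume.restrict (Ioo 0 1)) :=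
  aemeasurable_restrict_of_monotoneOn measurableSet_Ioo monotoneOn_quantile

theorem map_quantile : (volume.restrict (Ioo 0 1)).map (quantile F) = F := by
  refine Measure.ext_of_Iic _ _ fun x => ?_
  have hpre : quantile F ⁻¹' Iic x ∩ Ioo 0 1 = Ioo 0 1 ∩ Iic (cdf F x) := by
    ext u
    simp only [mem_inter_iff, mem_preimage, mem_Iic]
    exact ⟨fun ⟨h, hu⟩ => ⟨hu, (quantile_le_iff hu.1 hu.2).1 h⟩,
      fun ⟨hu, h⟩ => ⟨(quantile_le_iff hu.1 hu.2).2 h, hu⟩⟩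
  rw [Measure.map_apply_of_aemeasurable aemeasurable_quantile measurableSet_Iic,
    Measure.restrict_apply' measurableSet_Ioo, hpre,
    measure_congr ((Ioo_ae_eq_Ioc (μ := volume)).inter (ae_eq_refl (Iic (cdf F x)))),
    Ioc_inter_Iic, Real.volume_Ioc,
    min_eq_right (cdf_le_one F x), sub_zero, ofReal_cdf]

end Quantile

section StopLossKernel

variable (γ : Measure ℝ) [SFinite γ]

theorem lintegral_Ioi_ofReal_sub (a x : ℝ) :
    ∫⁻ s in Ioi a, ENNReal.ofReal (x - s) ∂γ = ∫⁻ t in Ioo a x, γ (Ioc a t) := by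
  have hE : MeasurableSet {p : ℝ × ℝ | p.1 ≤ p.2} := measurableSet_le measurable_fst measurable_snd
  calc ∫⁻ s in Ioi a, ENNReal.ofReal (x - s) ∂γ
      = ∫⁻ s in Ioi a, volume.restrict (Ioo a x) (Prod.mk s ⁻¹' {p | p.1 ≤ p.2}) ∂γ := by
        refine setLIntegral_congr_fun measurableSet_Ioi fun s (hs : a < s) => ?_
        rw [Measure.restrict_apply' measurableSet_Ioo, ← Real.volume_Ico]
        congr 1
        ext t
        simp only [mem_Ico, mem_inter_iff, mem_preimage, mem_ofPred_eq, mem_Ioo]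
        grind
    _ = ∫⁻ t in Ioo a x, γ.restrict (Ioi a) ((fun s => (s, t)) ⁻¹' {p | p.1 ≤ p.2}) :=
        (Measure.prod_apply hE).symm.trans (Measure.prod_apply_symm hE)
    _ = ∫⁻ t in Ioo a x, γ (Ioc a t) := by
        refine lintegral_congr fun t => ?_
        rw [Measure.restrict_apply' measurableSet_Ioi, inter_comm]
        rfl

theorem lintegral_Iic_ofReal_sub (a x : ℝ) :
    ∫⁻ s in Iic a, ENNReal.ofReal (s - x) ∂γ = ∫⁻ t in Ico x a, γ (Ioc t a) := by
  have hE : MeasurableSet {p : ℝ × ℝ | p.2 < p.1} := measurableSet_lt measurable_snd measurable_fst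
  calc ∫⁻ s in Iic a, ENNReal.ofReal (s - x) ∂γ
      = ∫⁻ s in Iic a, volume.restrict (Ico x a) (Prod.mk s ⁻¹' {p | p.2 < p.1}) ∂γ := by
        refine setLIntegral_congr_fun measurableSet_Iic fun s (hs : s ≤ a) => ?_
        rw [Measure.restrict_apply' measurableSet_Ico, ← Real.volume_Ico]
        congr 1
        ext t
        simp only [mem_Ico, mem_inter_iff, mem_preimage, mem_ofPred_eq]
        grind
    _ = ∫⁻ t in Ico x a, γ.restrict (Iic a) ((fun s => (s, t)) ⁻¹' {p | p.2 < p.1}) :=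
        (Measure.prod_apply hE).symm.trans (Measure.prod_apply_symm hE)
    _ = ∫⁻ t in Ico x a, γ (Ioc t a) := by
        refine lintegral_congr fun t => ?_
        rw [Measure.restrict_apply' measurableSet_Iic]
        rfl

end StopLossKernel

namespace ConvexOn

variable {φ : ℝ → ℝ}

protected theorem continuous (hφ : ConvexOn ℝ univ φ) : Continuous φ :=
  continuousOn_univ.1 (hφ.continuousOn isOpen_univ)

theorem monotone_rightDeriv (hφ : ConvexOn ℝ univ φ) :
    Monotone fun x => derivWithin φ (Ioi x) x := by
  simpa using hφ.monotoneOn_rightDeriv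

theorem add_rightDeriv_mul_sub_le (hφ : ConvexOn ℝ univ φ) (x y : ℝ) :
    φ x + derivWithin φ (Ioi x) x * (y - x) ≤ φ y := by
  rcases lt_trichotomy x y with hxy | rfl | hyx
  · have := hφ.rightDeriv_le_slope_of_mem_interior (by simp) (mem_univ y) hxy
    rw [slope_def_field, le_div_iff₀ (sub_pos.2 hxy)] at this
    linarith
  · simp
  · have := (hφ.slope_le_leftDeriv_of_mem_interior (mem_univ y) (by simp) hyx).trans
      (hφ.leftDeriv_le_rightDeriv_of_mem_interior (by simp))
    rw [slope_def_field, div_le_iff₀ (sub_pos.2 hyx)] at this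
    linarith

theorem sub_sub_rightDeriv_mul_nonneg (hφ : ConvexOn ℝ univ φ) (a x : ℝ) :
    0 ≤ φ x - φ a - derivWithin φ (Ioi a) a * (x - a) := by
  linarith [hφ.add_rightDeriv_mul_sub_le a x]

theorem continuousWithinAt_rightDeriv (hφ : ConvexOn ℝ univ φ) (x : ℝ) :
    ContinuousWithinAt (fun x => derivWithin φ (Ioi x) x) (Ici x) x := by
  rw [← continuousWithinAt_Ioi_iff_Ici, ContinuousWithinAt, tendsto_order]
  refine ⟨fun b hb => ?_, fun b hb => ?_⟩
  · filter_upwards [self_mem_nhdsWithin] with z hz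
    exact hb.trans_le (hφ.monotone_rightDeriv (le_of_lt hz))
  · have hslope := (hasDerivWithinAt_iff_tendsto_slope' (self_notMem_Ioi (a := x))).1
      (hφ.hasDerivWithinAt_rightDeriv_of_mem_interior (by simp))
    obtain ⟨w, hw, hxw⟩ := ((hslope.eventually (gt_mem_nhds hb)).and self_mem_nhdsWithin).exists
    -- the right derivative at `z ∈ (x, w)` is at most `slope φ z w`, which tends to `slope φ x w`
    have hcont : ContinuousAt (fun z => slope φ z w) x := by
      simp only [slope_def_field]
      exact ((continuous_const.sub hφ.continuous).continuousAt).div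
        (by fun_prop) (sub_ne_zero.2 (ne_of_gt hxw))
    filter_upwards [(hcont.tendsto.mono_left nhdsWithin_le_nhds).eventually (gt_mem_nhds hw),
      Ioo_mem_nhdsGT hxw] with z hzw hz
    exact (hφ.rightDeriv_le_slope_of_mem_interior (by simp) (mem_univ w) hz.2).trans_lt hzw

theorem integral_rightDeriv (hφ : ConvexOn ℝ univ φ) (a b : ℝ) :
    ∫ t in a..b, derivWithin φ (Ioi t) t = φ b - φ a :=
  intervalIntegral.integral_eq_sub_of_hasDeriv_right hφ.continuous.continuousOn
    (fun t _ => hφ.hasDerivWithinAt_rightDeriv_of_mem_interior (by simp))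
    hφ.monotone_rightDeriv.intervalIntegrable

noncomputable def rightDerivStieltjes (hφ : ConvexOn ℝ univ φ) : StieltjesFunction ℝ where
  toFun x := derivWithin φ (Ioi x) x
  mono' := hφ.monotone_rightDeriv
  right_continuous' := hφ.continuousWithinAt_rightDeriv

theorem rightDerivStieltjes_apply (hφ : ConvexOn ℝ univ φ) (x : ℝ) :
    hφ.rightDerivStieltjes x = derivWithin φ (Ioi x) x := rfl

theorem ofReal_sub_sub_rightDeriv_mul_eq (hφ : ConvexOn ℝ univ φ) (a x : ℝ) :
    ENNReal.ofReal (φ x - φ a - derivWithin φ (Ioi a) a * (x - a)) =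
      ∫⁻ s in Ioi a, ENNReal.ofReal (x - s) ∂hφ.rightDerivStieltjes.measure +
        ∫⁻ s in Iic a, ENNReal.ofReal (s - x) ∂hφ.rightDerivStieltjes.measure := by
  set k := fun t => derivWithin φ (Ioi t) t
  have hk : Monotone k := hφ.monotone_rightDeriv
  have htaylor : φ x - φ a - k a * (x - a) = ∫ t in a..x, (k t - k a) := by
    rw [intervalIntegral.integral_sub hk.intervalIntegrable intervalIntegrable_const,
      hφ.integral_rightDeriv, intervalIntegral.integral_const, smul_eq_mul]
    ring
  rw [lintegral_Ioi_ofReal_sub, lintegral_Iic_ofReal_sub, htaylor]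
  simp only [StieltjesFunction.measure_Ioc, rightDerivStieltjes_apply]
  rcases le_total a x with hax | hxa
  · rw [Ico_eq_empty_of_le hax, Measure.restrict_empty, lintegral_zero_measure, add_zero,
      setLIntegral_congr Ioo_ae_eq_Ioc, intervalIntegral.integral_of_le hax,
      ofReal_integral_eq_lintegral_ofReal
        ((hk.intervalIntegrable.sub intervalIntegrable_const).1)
        ((ae_restrict_iff' measurableSet_Ioc).2
          (Eventually.of_forall fun t ht => sub_nonneg.2 (hk ht.1.le)))]
  · rw [Ioo_eq_empty_of_le hxa, Measure.restrict_empty, lintegral_zero_measure, zero_add,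
      setLIntegral_congr Ico_ae_eq_Ioc, intervalIntegral.integral_symm,
      intervalIntegral.integral_of_le hxa, ← integral_neg]
    simp only [neg_sub]
    rw [ofReal_integral_eq_lintegral_ofReal
        ((intervalIntegrable_const.sub hk.intervalIntegrable).1)
        ((ae_restrict_iff' measurableSet_Ioc).2
          (Eventually.of_forall fun t ht => sub_nonneg.2 (hk ht.2)))]

theorem ofReal_integral_sub_sub_rightDeriv_mul_eq (hφ : ConvexOn ℝ univ φ) (a : ℝ) (ρ : Measure ℝ)
    [SFinite ρ] (hint : Integrable (fun x => φ x - φ a - derivWithin φ (Ioi a) a * (x - a)) ρ) :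
    ENNReal.ofReal (∫ x, φ x - φ a - derivWithin φ (Ioi a) a * (x - a) ∂ρ) =
      ∫⁻ s in Ioi a, ∫⁻ x, ENNReal.ofReal (x - s) ∂ρ ∂hφ.rightDerivStieltjes.measure +
        ∫⁻ s in Iic a, ∫⁻ x, ENNReal.ofReal (s - x) ∂ρ ∂hφ.rightDerivStieltjes.measure := by
  have hm₁ : Measurable fun p : ℝ × ℝ => ENNReal.ofReal (p.1 - p.2) := by fun_prop
  have hm₂ : Measurable fun p : ℝ × ℝ => ENNReal.ofReal (p.2 - p.1) := by fun_prop
  rw [ofReal_integral_eq_lintegral_ofReal hint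
    (Eventually.of_forall (hφ.sub_sub_rightDeriv_mul_nonneg a))]
  simp_rw [hφ.ofReal_sub_sub_rightDeriv_mul_eq a]
  rw [lintegral_add_left hm₁.lintegral_prod_right']
  congr 1
  · exact lintegral_lintegral_swap hm₁.aemeasurable
  · exact lintegral_lintegral_swap hm₂.aemeasurable

end ConvexOn

section StopLoss

variable {ρ : Measure ℝ}

theorem lintegral_ofReal_eq_ofReal_integral_max {f : ℝ → ℝ} (hf : Integrable f ρ) :
    ∫⁻ x, ENNReal.ofReal (f x) ∂ρ = ENNReal.ofReal (∫ x, max (f x) 0 ∂ρ) := by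
  rw [ofReal_integral_eq_lintegral_ofReal hf.pos_part (ae_of_all _ fun x => le_max_right _ _)]
  simp [ENNReal.ofReal_max]

variable [IsProbabilityMeasure ρ]

theorem integral_max_sub_zero_eq (hρ : Integrable id ρ) (s : ℝ) :
    ∫ x, max (s - x) 0 ∂ρ = ∫ x, max (x - s) 0 ∂ρ - (∫ x, x ∂ρ - s) := by
  have hx : Integrable (fun x => x - s) ρ := hρ.sub (integrable_const s)
  have hsplit (x : ℝ) : max (s - x) 0 = max (x - s) 0 - (x - s) := by
    simp only [max_def]
    split_ifs <;> linarith
  simp_rw [hsplit]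
  rw [integral_sub hx.pos_part hx, integral_sub (f := fun x => x) hρ (integrable_const s),
    integral_const]
  simp

theorem integral_sub_sub_mul_sub_eq {φ : ℝ → ℝ} (hφ : Integrable φ ρ) (hρ : Integrable id ρ)
    (a c : ℝ) :
    ∫ x, φ x - φ a - c * (x - a) ∂ρ = ∫ x, φ x ∂ρ - φ a - c * (∫ x, x ∂ρ - a) := by
  have hx : Integrable (fun x => x - a) ρ := hρ.sub (integrable_const a)
  rw [integral_sub (f := fun x => φ x - φ a) (hφ.sub (integrable_const _)) (hx.const_mul c),
    integral_sub hφ (integrable_const _), integral_const_mul,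
    integral_sub (f := fun x => x) hρ (integrable_const a)]
  simp

end StopLoss

theorem lintegral_ofReal_sub_le_of_integral_eq {μ ν : Measure ℝ} [IsProbabilityMeasure μ]
    [IsProbabilityMeasure ν] (hμ : Integrable id μ) (hν : Integrable id ν)
    (hmean : ∫ x, x ∂μ = ∫ x, x ∂ν) {s : ℝ}
    (hsl : ∫⁻ x, ENNReal.ofReal (x - s) ∂μ ≤ ∫⁻ x, ENNReal.ofReal (x - s) ∂ν) :
    ∫⁻ x, ENNReal.ofReal (s - x) ∂μ ≤ ∫⁻ x, ENNReal.ofReal (s - x) ∂ν := by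
  rw [lintegral_ofReal_eq_ofReal_integral_max (f := fun x => x - s) (hμ.sub (integrable_const s)),
    lintegral_ofReal_eq_ofReal_integral_max (f := fun x => x - s) (hν.sub (integrable_const s)),
    ENNReal.ofReal_le_ofReal_iff (integral_nonneg fun x => le_max_right (x - s) 0)] at hsl
  rw [lintegral_ofReal_eq_ofReal_integral_max (f := fun x => s - x) ((integrable_const s).sub hμ),
    lintegral_ofReal_eq_ofReal_integral_max (f := fun x => s - x) ((integrable_const s).sub hν),
    integral_max_sub_zero_eq hμ, integral_max_sub_zero_eq hν, hmean]
  exact ENNReal.ofReal_le_ofReal (by linarith)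

theorem convexOrder_of_integral_eq_of_stopLoss_le (μ ν : Measure ℝ) [IsProbabilityMeasure μ]
    [IsProbabilityMeasure ν] (hμ : Integrable id μ) (hν : Integrable id ν)
    (hmean : ∫ x, x ∂μ = ∫ x, x ∂ν)
    (hsl : ∀ a, ∫⁻ x, ENNReal.ofReal (x - a) ∂μ ≤ ∫⁻ x, ENNReal.ofReal (x - a) ∂ν) :
    ConvexOrder μ ν := by
  intro φ hφ hφμ hφν
  set c := derivWithin φ (Ioi 0) 0
  have hψ (ρ : Measure ℝ) [IsFiniteMeasure ρ] (hρφ : Integrable φ ρ) (hρ : Integrable id ρ) :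
      Integrable (fun x => φ x - φ 0 - c * (x - 0)) ρ :=
    (hρφ.sub (integrable_const _)).sub ((hρ.sub (integrable_const 0)).const_mul c)
  have key : ∫ x, φ x - φ 0 - c * (x - 0) ∂μ ≤ ∫ x, φ x - φ 0 - c * (x - 0) ∂ν := by
    rw [← ENNReal.ofReal_le_ofReal_iff (integral_nonneg (hφ.sub_sub_rightDeriv_mul_nonneg 0)),
      hφ.ofReal_integral_sub_sub_rightDeriv_mul_eq 0 μ (hψ μ hφμ hμ),
      hφ.ofReal_integral_sub_sub_rightDeriv_mul_eq 0 ν (hψ ν hφν hν)]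
    exact add_le_add (lintegral_mono fun s => hsl s) (lintegral_mono fun s =>
      lintegral_ofReal_sub_le_of_integral_eq hμ hν hmean (hsl s))
  rw [integral_sub_sub_mul_sub_eq hφμ hμ, integral_sub_sub_mul_sub_eq hφν hν, hmean] at key
  linarith

section ComonotoneSplit

variable {ι β : Type*} [Fintype ι] {f : ι → β → ℝ} {a : ℝ}

theorem bddAbove_range_of_sum_le [SemilatticeSup β] [Nonempty β] (hf : ∀ i, Monotone (f i))
    (h : ∀ b, ∑ j, f j b ≤ a) (i : ι) : BddAbove (range (f i)) := by
  classical
  obtain ⟨b₀⟩ := ‹Nonempty β›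
  refine ⟨a - ∑ j ∈ Finset.univ.erase i, f j b₀, ?_⟩
  rintro _ ⟨b, rfl⟩
  have hsum := h (b ⊔ b₀)
  rw [← Finset.add_sum_erase _ _ (Finset.mem_univ i)] at hsum
  have hrest : ∑ j ∈ Finset.univ.erase i, f j b₀ ≤ ∑ j ∈ Finset.univ.erase i, f j (b ⊔ b₀) :=
    Finset.sum_le_sum fun j _ => hf j le_sup_right
  linarith [hf i (le_sup_left : b ≤ b ⊔ b₀)]

theorem bddBelow_range_of_le_sum [SemilatticeInf β] [Nonempty β] (hf : ∀ i, Monotone (f i))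
    (h : ∀ b, a ≤ ∑ j, f j b) (i : ι) : BddBelow (range (f i)) := by
  classical
  obtain ⟨b₀⟩ := ‹Nonempty β›
  refine ⟨a - ∑ j ∈ Finset.univ.erase i, f j b₀, ?_⟩
  rintro _ ⟨b, rfl⟩
  have hsum := h (b ⊓ b₀)
  rw [← Finset.add_sum_erase _ _ (Finset.mem_univ i)] at hsum
  have hrest : ∑ j ∈ Finset.univ.erase i, f j (b ⊓ b₀) ≤ ∑ j ∈ Finset.univ.erase i, f j b₀ :=
    Finset.sum_le_sum fun j _ => hf j inf_le_right
  linarith [hf i (inf_le_left : b ⊓ b₀ ≤ b)]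

theorem sum_ciSup_le_and_le_ciSup [LinearOrder β] {s : Set β} (hs : s.Nonempty)
    (hf : ∀ i, MonotoneOn (f i) s) (h : ∀ b ∈ s, ∑ j, f j b ≤ a) :
    ∑ i, ⨆ b : s, f i b ≤ a ∧ ∀ b ∈ s, ∀ i, f i b ≤ ⨆ b : s, f i b := by
  have := hs.to_subtype
  have hf' (i : ι) : Monotone fun b : s => f i b := fun b c hbc => hf i b.2 c.2 hbc
  have hbdd := bddAbove_range_of_sum_le hf' fun b => h b b.2
  exact ⟨le_of_tendsto' (tendsto_finsetSum _ fun i _ => tendsto_atTop_ciSup (hf' i) (hbdd i))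
    fun b => h b b.2, fun b hb i => le_ciSup (hbdd i) ⟨b, hb⟩⟩

theorem le_sum_ciInf_and_ciInf_le [LinearOrder β] {s : Set β} (hs : s.Nonempty)
    (hf : ∀ i, MonotoneOn (f i) s) (h : ∀ b ∈ s, a ≤ ∑ j, f j b) :
    a ≤ ∑ i, ⨅ b : s, f i b ∧ ∀ b ∈ s, ∀ i, ⨅ b : s, f i b ≤ f i b := by
  have := hs.to_subtype
  have hf' (i : ι) : Monotone fun b : s => f i b := fun b c hbc => hf i b.2 c.2 hbc
  have hbdd := bddBelow_range_of_le_sum hf' fun b => h b b.2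
  exact ⟨ge_of_tendsto' (tendsto_finsetSum _ fun i _ => tendsto_atBot_ciInf (hf' i) (hbdd i))
    fun b => h b b.2, fun b hb i => ciInf_le (hbdd i) ⟨b, hb⟩⟩

theorem exists_sum_eq_of_sum_le_of_le_sum {lo hi : ι → ℝ} (hlohi : lo ≤ hi)
    (hlo : ∑ i, lo i ≤ a) (hhi : a ≤ ∑ i, hi i) :
    ∃ d : ι → ℝ, lo ≤ d ∧ d ≤ hi ∧ ∑ i, d i = a := by
  have hcont : ContinuousOn (fun θ : ℝ => ∑ i, (lo i + θ * (hi i - lo i))) (Icc 0 1) := by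
    fun_prop
  obtain ⟨θ, ⟨hθ₀, hθ₁⟩, hθ⟩ := intermediate_value_Icc zero_le_one hcont
    ⟨by simpa using hlo, by simpa using hhi⟩
  refine ⟨fun i => lo i + θ * (hi i - lo i), fun i => ?_, fun i => ?_, hθ⟩
  · nlinarith [sub_nonneg.2 (hlohi i)]
  · nlinarith [sub_nonneg.2 (hlohi i)]

theorem exists_sum_eq_forall_le_or_forall_le [LinearOrder β] [Nonempty ι]
    (hf : ∀ i, Monotone (f i)) (a : ℝ) :
    ∃ d : ι → ℝ, ∑ i, d i = a ∧ ∀ b, (∀ i, f i b ≤ d i) ∨ (∀ i, d i ≤ f i b) := by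
  classical
  obtain ⟨i₀⟩ := ‹Nonempty ι›
  set L := {b | ∑ i, f i b ≤ a}
  set U := {b | a < ∑ i, f i b}
  suffices ∃ d : ι → ℝ, ∑ i, d i = a ∧ (∀ b ∈ L, ∀ i, f i b ≤ d i) ∧
      (∀ b ∈ U, ∀ i, d i ≤ f i b) by
    obtain ⟨d, hd, hL, hU⟩ := this
    exact ⟨d, hd, fun b => (le_or_gt (∑ i, f i b) a).imp (hL b) (hU b)⟩
  set lo := fun i => ⨆ b : L, f i b
  set hi := fun i => ⨅ b : U, f i b
  have hlo (hL : L.Nonempty) : ∑ i, lo i ≤ a ∧ ∀ b ∈ L, ∀ i, f i b ≤ lo i :=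
    sum_ciSup_le_and_le_ciSup hL (fun i => (hf i).monotoneOn L) fun _ hb => hb
  have hhi (hU : U.Nonempty) : a ≤ ∑ i, hi i ∧ ∀ b ∈ U, ∀ i, hi i ≤ f i b :=
    le_sum_ciInf_and_ciInf_le hU (fun i => (hf i).monotoneOn U) fun _ hb => le_of_lt hb
  rcases L.eq_empty_or_nonempty with hL | hL <;> rcases U.eq_empty_or_nonempty with hU | hU
  · exact ⟨Pi.single i₀ a, by simp, by simp [hL], by simp [hU]⟩
  · refine ⟨hi - Pi.single i₀ (∑ i, hi i - a), by simp [Finset.sum_sub_distrib], by simp [hL],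
      fun b hb i => le_trans ?_ ((hhi hU).2 b hb i)⟩
    rcases eq_or_ne i i₀ with rfl | h
    · simp [(hhi hU).1]
    · simp [h]
  · refine ⟨lo + Pi.single i₀ (a - ∑ i, lo i), by simp [Finset.sum_add_distrib],
      fun b hb i => le_trans ((hlo hL).2 b hb i) ?_, by simp [hU]⟩
    rcases eq_or_ne i i₀ with rfl | h
    · simp [(hlo hL).1]
    · simp [h]
  · have hlohi : lo ≤ hi := fun i => by
      have := hL.to_subtype
      have := hU.to_subtype
      refine ciSup_le fun b => le_ciInf fun b' => hf i ?_
      by_contra! h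
      exact (b'.2 : a < _).not_ge ((Finset.sum_le_sum fun j _ => hf j h.le).trans b.2)
    obtain ⟨d, hlod, hdhi, hd⟩ := exists_sum_eq_of_sum_le_of_le_sum hlohi (hlo hL).1 (hhi hU).1
    exact ⟨d, hd, fun b hb i => ((hlo hL).2 b hb i).trans (hlod i),
      fun b hb i => (hdhi i).trans ((hhi hU).2 b hb i)⟩

end ComonotoneSplit

section SumOfMarginals

variable {ι Ω : Type*} [Fintype ι]

theorem ENNReal.ofReal_sum_sub_sum_le (x d : ι → ℝ) :
    ENNReal.ofReal (∑ i, x i - ∑ i, d i) ≤ ∑ i, ENNReal.ofReal (x i - d i) := by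
  rw [← Finset.sum_sub_distrib]
  exact Finset.le_sum_of_subadditive _ ENNReal.ofReal_zero.le (fun _ _ => ENNReal.ofReal_add_le) _ _

theorem ENNReal.ofReal_sum_sub_sum_eq {x d : ι → ℝ} (h : (∀ i, x i ≤ d i) ∨ (∀ i, d i ≤ x i)) :
    ENNReal.ofReal (∑ i, x i - ∑ i, d i) = ∑ i, ENNReal.ofReal (x i - d i) := by
  rw [← Finset.sum_sub_distrib]
  rcases h with h | h
  · rw [ENNReal.ofReal_of_nonpos (Finset.sum_nonpos fun i _ => sub_nonpos.2 (h i))]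
    exact (Finset.sum_eq_zero fun i _ => ENNReal.ofReal_of_nonpos (sub_nonpos.2 (h i))).symm
  · exact ENNReal.ofReal_sum_of_nonneg fun i _ => sub_nonneg.2 (h i)

variable [MeasurableSpace Ω] {P : Measure Ω} {Y : ι → Ω → ℝ} {F : ι → Measure ℝ}

theorem integrable_of_map_eq {Z : Ω → ℝ} {G : Measure ℝ} (hZ : AEMeasurable Z P)
    (hG : P.map Z = G) (hint : Integrable id G) : Integrable Z P := by
  rw [← hG, integrable_map_measure aestronglyMeasurable_id hZ] at hint
  exact hint

theorem integrable_id_map_sum (hY : ∀ i, AEMeasurable (Y i) P) (hF : ∀ i, P.map (Y i) = F i)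
    (hint : ∀ i, Integrable id (F i)) : Integrable id (P.map fun ω => ∑ i, Y i ω) := by
  rw [integrable_map_measure aestronglyMeasurable_id
    (Finset.aemeasurable_fun_sum _ fun i _ => hY i)]
  exact integrable_finsetSum _ fun i _ => integrable_of_map_eq (hY i) (hF i) (hint i)

theorem integral_id_map_sum (hY : ∀ i, AEMeasurable (Y i) P) (hF : ∀ i, P.map (Y i) = F i)
    (hint : ∀ i, Integrable id (F i)) :
    ∫ x, x ∂(P.map fun ω => ∑ i, Y i ω) = ∑ i, ∫ x, x ∂(F i) := by
  rw [integral_map (Finset.aemeasurable_fun_sum _ fun i _ => hY i)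
      measurable_id'.aestronglyMeasurable,
    integral_finsetSum _ fun i _ => integrable_of_map_eq (hY i) (hF i) (hint i)]
  refine Finset.sum_congr rfl fun i _ => ?_
  rw [← hF i, integral_map (hY i) measurable_id'.aestronglyMeasurable]

theorem sum_lintegral_ofReal_sub_eq (hY : ∀ i, AEMeasurable (Y i) P)
    (hF : ∀ i, P.map (Y i) = F i) (d : ι → ℝ) :
    ∑ i, ∫⁻ x, ENNReal.ofReal (x - d i) ∂(F i) =
      ∫⁻ ω, ∑ i, ENNReal.ofReal (Y i ω - d i) ∂P := by
  rw [lintegral_finsetSum' _ fun i _ => ((hY i).sub_const _).ennreal_ofReal]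
  refine Finset.sum_congr rfl fun i _ => ?_
  rw [← hF i, lintegral_map' (by fun_prop) (hY i)]

theorem lintegral_ofReal_sub_map_sum_le (hY : ∀ i, AEMeasurable (Y i) P)
    (hF : ∀ i, P.map (Y i) = F i) (d : ι → ℝ) :
    ∫⁻ x, ENNReal.ofReal (x - ∑ i, d i) ∂(P.map fun ω => ∑ i, Y i ω) ≤
      ∑ i, ∫⁻ x, ENNReal.ofReal (x - d i) ∂(F i) := by
  rw [sum_lintegral_ofReal_sub_eq hY hF,
    lintegral_map' (by fun_prop) (Finset.aemeasurable_fun_sum _ fun i _ => hY i)]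
  exact lintegral_mono fun ω => ENNReal.ofReal_sum_sub_sum_le _ _

theorem lintegral_ofReal_sub_map_sum_eq (hY : ∀ i, AEMeasurable (Y i) P)
    (hF : ∀ i, P.map (Y i) = F i) {d : ι → ℝ}
    (hd : ∀ᵐ ω ∂P, (∀ i, Y i ω ≤ d i) ∨ (∀ i, d i ≤ Y i ω)) :
    ∫⁻ x, ENNReal.ofReal (x - ∑ i, d i) ∂(P.map fun ω => ∑ i, Y i ω) =
      ∑ i, ∫⁻ x, ENNReal.ofReal (x - d i) ∂(F i) := by
  rw [sum_lintegral_ofReal_sub_eq hY hF,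
    lintegral_map' (by fun_prop) (Finset.aemeasurable_fun_sum _ fun i _ => hY i)]
  exact lintegral_congr_ae (hd.mono fun ω => ENNReal.ofReal_sum_sub_sum_eq)

end SumOfMarginals

theorem stmt0 (n : ℕ) (Fs : Fin n → Measure ℝ)
    (hprob : ∀ i, IsProbabilityMeasure (Fs i))
    (hint : ∀ i, Integrable id (Fs i))
    (Ω : Type) [MeasureSpace Ω] [IsProbabilityMeasure (ℙ : Measure Ω)]
    (X : Fin n → Ω → ℝ) (hX : ∀ i, Measurable (X i))
    (hdist : ∀ i, Measure.map (X i) ℙ = Fs i) :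
    ConvexOrder (Measure.map (fun ω => ∑ i, X i ω) ℙ)
      (Measure.map (fun t => ∑ i, quantile (Fs i) t)
        (volume.restrict (Set.Ioo (0:ℝ) 1))) := by
  rcases isEmpty_or_nonempty (Fin n) with hn | hn
  · simp only [Finset.univ_eq_empty, Finset.sum_empty, Measure.map_const, measure_univ, one_smul]
    exact fun _ _ _ _ => le_rfl
  have hXm (i : Fin n) : AEMeasurable (X i) ℙ := (hX i).aemeasurable
  have hqm (i : Fin n) : AEMeasurable (quantile (Fs i)) (volume.restrict (Ioo 0 1)) :=
    have := hprob i; aemeasurable_quantile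
  have hqF (i : Fin n) : (volume.restrict (Ioo 0 1)).map (quantile (Fs i)) = Fs i :=
    have := hprob i; map_quantile
  have := Measure.isProbabilityMeasure_map
    (Finset.aemeasurable_fun_sum Finset.univ fun i _ => hXm i)
  have := Measure.isProbabilityMeasure_map
    (Finset.aemeasurable_fun_sum Finset.univ fun i _ => hqm i)
  refine convexOrder_of_integral_eq_of_stopLoss_le _ _ (integrable_id_map_sum hXm hdist hint)
    (integrable_id_map_sum hqm hqF hint)
    (by rw [integral_id_map_sum hXm hdist hint, integral_id_map_sum hqm hqF hint]) fun a => ?_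
  obtain ⟨d, rfl, hd⟩ := exists_sum_eq_forall_le_or_forall_le
    (f := fun i (u : Ioo (0 : ℝ) 1) => quantile (Fs i) u)
    (fun i _ _ huv => have := hprob i; monotoneOn_quantile (Subtype.prop _) (Subtype.prop _) huv) a
  rw [lintegral_ofReal_sub_map_sum_eq hqm hqF
    ((ae_restrict_iff' measurableSet_Ioo).2 (Eventually.of_forall fun u hu => hd ⟨u, hu⟩))]
  exact lintegral_ofReal_sub_map_sum_le hXm hdist d
end

section
/- For distributions F, G with finite mean and equal means, G ≺cx F if and only if for every k ∈ ℝ, ∫(x−k)₊ dG(x) ≤ ∫(x−k)₊ dF(x). -/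
open MeasureTheory ProbabilityTheory Set

/-! A convex `φ` is the increasing limit of the maxima of its tangent lines at the first points
of a dense sequence. Adding tangent points in increasing order, each new tangent raises the
maximum by a hinge `c (x - k)₊` with `c ≥ 0`, so each maximum is an affine function plus a
nonnegative combination of hinges: the affine part has the same integral under both measures since
the means agree, and the hinges are ordered by hypothesis. Monotone convergence passes the
inequality to `φ`. -/

open Filter Topology

noncomputable def rightTangent (φ : ℝ → ℝ) (q x : ℝ) : ℝ :=
  φ q + derivWithin φ (Ioi q) q * (x - q)

noncomputable def tangentSup (φ : ℝ → ℝ) (u : ℕ → ℝ) (N : ℕ) (x : ℝ) : ℝ :=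
  ((Finset.range (N + 1)).image u).sup' (by simp) (rightTangent φ · x)

theorem monotone_tangentSup (φ : ℝ → ℝ) (u : ℕ → ℝ) (x : ℝ) :
    Monotone fun N => tangentSup φ u N x :=
  fun _ _ hMN => Finset.sup'_mono _
    (Finset.image_subset_image (Finset.range_subset_range.2 (by omega))) _

namespace ConvexOn

variable {φ : ℝ → ℝ}

theorem rightDeriv_mono (hφ : ConvexOn ℝ univ φ) {q r : ℝ} (h : q ≤ r) :
    derivWithin φ (Ioi q) q ≤ derivWithin φ (Ioi r) r :=
  hφ.monotoneOn_rightDeriv (by simp) (by simp) h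

theorem rightTangent_le (hφ : ConvexOn ℝ univ φ) (q x : ℝ) : rightTangent φ q x ≤ φ x := by
  have hq : q ∈ interior univ := by simp
  rcases lt_trichotomy x q with hxq | rfl | hqx
  · have h := (hφ.slope_le_leftDeriv_of_mem_interior (mem_univ x) hq hxq).trans
      (hφ.leftDeriv_le_rightDeriv_of_mem_interior hq)
    rw [slope_def_field, div_le_iff₀ (sub_pos.2 hxq)] at h
    unfold rightTangent
    linarith
  · simp [rightTangent]
  · have h := hφ.rightDeriv_le_slope_of_mem_interior hq (mem_univ x) hqx
    rw [slope_def_field, le_div_iff₀ (sub_pos.2 hqx)] at h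
    unfold rightTangent
    linarith

theorem rightTangent_le_rightTangent (hφ : ConvexOn ℝ univ φ) {q m x : ℝ} (hm : m ∈ uIcc q x) :
    rightTangent φ q x ≤ rightTangent φ m x := by
  have hqm := hφ.rightTangent_le q m
  unfold rightTangent at *
  rcases mem_uIcc.1 hm with ⟨hq, hx⟩ | ⟨hx, hq⟩ <;>
    nlinarith [mul_nonneg (sub_nonneg.2 (hφ.rightDeriv_mono hq)) (sub_nonneg.2 hx)]

theorem sup'_rightTangent_of_max'_le (hφ : ConvexOn ℝ univ φ) {S : Finset ℝ} (hS : S.Nonempty)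
    {x : ℝ} (hx : S.max' hS ≤ x) :
    S.sup' hS (rightTangent φ · x) = rightTangent φ (S.max' hS) x :=
  le_antisymm
    (Finset.sup'_le _ _ fun q hq =>
      hφ.rightTangent_le_rightTangent (mem_uIcc.2 (Or.inl ⟨S.le_max' q hq, hx⟩)))
    (Finset.le_sup' (rightTangent φ · x) (S.max'_mem hS))

theorem sup'_insert_rightTangent (hφ : ConvexOn ℝ univ φ) {S : Finset ℝ} (hS : S.Nonempty)
    {a : ℝ} (ha : S.max' hS ≤ a) (x : ℝ) :
    (insert a S).sup' (Finset.insert_nonempty a S) (rightTangent φ · x) =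
      S.sup' hS (rightTangent φ · x) +
        max (rightTangent φ a x - rightTangent φ (S.max' hS) x) 0 := by
  rw [Finset.sup'_insert (H := hS)]
  rcases le_total x (S.max' hS) with hxb | hbx
  · have hab : rightTangent φ a x ≤ rightTangent φ (S.max' hS) x :=
      hφ.rightTangent_le_rightTangent (mem_uIcc.2 (Or.inr ⟨hxb, ha⟩))
    rw [max_eq_right (sub_nonpos.2 hab), add_zero, sup_eq_right]
    exact hab.trans (Finset.le_sup' (rightTangent φ · x) (S.max'_mem hS))
  · rw [hφ.sup'_rightTangent_of_max'_le hS hbx]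
    rcases le_total (rightTangent φ a x) (rightTangent φ (S.max' hS) x) with h | h <;> simp [h]

theorem tendsto_rightTangent_nhdsGT (hφ : ConvexOn ℝ univ φ) (x : ℝ) :
    Tendsto (fun q => rightTangent φ q x) (𝓝[>] x) (𝓝 (φ x)) := by
  set c := derivWithin φ (Ioi (x + 1)) (x + 1)
  have hcont : Continuous φ := continuousOn_univ.1 (hφ.continuousOn isOpen_univ)
  have hlower : Tendsto (fun q => φ q + c * (x - q)) (𝓝[>] x) (𝓝 (φ x)) := by
    have : Tendsto (fun q => φ q + c * (x - q)) (𝓝 x) (𝓝 (φ x + c * (x - x))) :=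
      (hcont.add (continuous_const.mul (continuous_const.sub continuous_id))).tendsto x
    simpa using this.mono_left nhdsWithin_le_nhds
  refine tendsto_of_tendsto_of_tendsto_of_le_of_le' hlower tendsto_const_nhds ?_
    (Eventually.of_forall fun q => hφ.rightTangent_le q x)
  filter_upwards [Ioo_mem_nhdsGT (lt_add_one x)] with q hq
  unfold rightTangent
  nlinarith [hq.1, hφ.rightDeriv_mono hq.2.le]

theorem tangentSup_le (hφ : ConvexOn ℝ univ φ) (u : ℕ → ℝ) (N : ℕ) (x : ℝ) :
    tangentSup φ u N x ≤ φ x :=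
  Finset.sup'_le _ _ fun q _ => hφ.rightTangent_le q x

theorem tendsto_tangentSup (hφ : ConvexOn ℝ univ φ) {u : ℕ → ℝ} (hu : DenseRange u) (x : ℝ) :
    Tendsto (fun N => tangentSup φ u N x) atTop (𝓝 (φ x)) := by
  refine tendsto_order.2 ⟨fun a ha => ?_, fun a ha =>
    Eventually.of_forall fun N => (hφ.tangentSup_le u N x).trans_lt ha⟩
  obtain ⟨b, hxb, hb⟩ := mem_nhdsGT_iff_exists_Ioo_subset.1
    ((hφ.tendsto_rightTangent_nhdsGT x).eventually (lt_mem_nhds ha))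
  obtain ⟨n, hn⟩ := hu.exists_mem_open isOpen_Ioo (nonempty_Ioo.2 hxb)
  filter_upwards [eventually_ge_atTop n] with N hN
  exact (hb hn).trans_le (Finset.le_sup' (rightTangent φ · x)
    (Finset.mem_image_of_mem u (Finset.mem_range.2 (by omega))))

theorem tendsto_integral_tangentSup (hφ : ConvexOn ℝ univ φ) {u : ℕ → ℝ}
    (hu : DenseRange u) {μ : Measure ℝ} (hint : ∀ N, Integrable (tangentSup φ u N) μ)
    (hφμ : Integrable φ μ) :
    Tendsto (fun N => ∫ x, tangentSup φ u N x ∂μ) atTop (𝓝 (∫ x, φ x ∂μ)) :=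
  integral_tendsto_of_tendsto_of_monotone hint hφμ
    (Eventually.of_forall (monotone_tangentSup φ u))
    (Eventually.of_forall (hφ.tendsto_tangentSup hu))

end ConvexOn

def IntegralLE {α : Type*} [MeasurableSpace α] (μ ν : Measure α) (f : α → ℝ) : Prop :=
  Integrable f μ ∧ Integrable f ν ∧ ∫ x, f x ∂μ ≤ ∫ x, f x ∂ν

theorem IntegralLE.add {α : Type*} [MeasurableSpace α] {μ ν : Measure α} {f g : α → ℝ}
    (hf : IntegralLE μ ν f) (hg : IntegralLE μ ν g) : IntegralLE μ ν fun x => f x + g x := by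
  refine ⟨hf.1.add hg.1, hf.2.1.add hg.2.1, ?_⟩
  rw [integral_add hf.1 hg.1, integral_add hf.2.1 hg.2.1]
  exact add_le_add hf.2.2 hg.2.2

theorem integrable_affine {μ : Measure ℝ} [IsFiniteMeasure μ] (hμ : Integrable id μ)
    (c d : ℝ) :
    Integrable (fun x => c * x + d) μ :=
  (hμ.const_mul c).add (integrable_const d)

section

variable {μ ν : Measure ℝ} [IsProbabilityMeasure μ] [IsProbabilityMeasure ν]

theorem integral_affine (hμ : Integrable id μ) (c d : ℝ) :
    ∫ x, (c * x + d) ∂μ = c * ∫ x, x ∂μ + d := by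
  have hlin : Integrable (fun x => c * x) μ := hμ.const_mul c
  rw [integral_add hlin (integrable_const d), integral_const_mul]
  simp

theorem integralLE_affine (hμ : Integrable id μ) (hν : Integrable id ν)
    (hmean : ∫ x, x ∂μ = ∫ x, x ∂ν) (c d : ℝ) : IntegralLE μ ν fun x => c * x + d :=
  ⟨integrable_affine hμ c d, integrable_affine hν c d,
    by rw [integral_affine hμ, integral_affine hν, hmean]⟩

theorem integralLE_posPart_affine (hμ : Integrable id μ) (hν : Integrable id ν)
    (hk : ∀ k : ℝ, ∫ x, max (x - k) 0 ∂μ ≤ ∫ x, max (x - k) 0 ∂ν) {c : ℝ} (hc : 0 ≤ c)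
    (d : ℝ) : IntegralLE μ ν fun x => max (c * x + d) 0 := by
  refine ⟨(integrable_affine hμ c d).pos_part, (integrable_affine hν c d).pos_part, ?_⟩
  rcases hc.eq_or_lt with rfl | hc
  · simp
  · have hscale : ∀ x, max (c * x + d) 0 = c * max (x - (-d / c)) 0 := fun x => by
      rw [mul_max_of_nonneg _ _ hc.le, mul_zero, mul_sub, mul_div_cancel₀ _ hc.ne',
        sub_neg_eq_add]
    simp only [hscale, integral_const_mul]
    exact mul_le_mul_of_nonneg_left (hk _) hc.le

theorem integralLE_sup'_rightTangent {φ : ℝ → ℝ} (hφ : ConvexOn ℝ univ φ)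
    (hμ : Integrable id μ) (hν : Integrable id ν) (hmean : ∫ x, x ∂μ = ∫ x, x ∂ν)
    (hk : ∀ k : ℝ, ∫ x, max (x - k) 0 ∂μ ≤ ∫ x, max (x - k) 0 ∂ν)
    (S : Finset ℝ) (hS : S.Nonempty) :
    IntegralLE μ ν fun x => S.sup' hS (rightTangent φ · x) := by
  induction S using Finset.induction_on_max with
  | empty => exact absurd hS Finset.not_nonempty_empty
  | insert a S ha ih =>
    rcases S.eq_empty_or_nonempty with rfl | hS'
    · simp only [insert_empty_eq, Finset.sup'_singleton]
      convert integralLE_affine hμ hν hmean (derivWithin φ (Ioi a) a)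
        (φ a - derivWithin φ (Ioi a) a * a) using 2 with x
      unfold rightTangent
      ring
    · have hba : S.max' hS' ≤ a := (ha _ (S.max'_mem hS')).le
      simp only [hφ.sup'_insert_rightTangent hS' hba]
      refine (ih hS').add ?_
      convert integralLE_posPart_affine hμ hν hk (sub_nonneg.2 (hφ.rightDeriv_mono hba))
        (φ a - derivWithin φ (Ioi a) a * a -
          (φ (S.max' hS') - derivWithin φ (Ioi (S.max' hS')) (S.max' hS') * S.max' hS'))
        using 3 with x
      unfold rightTangent
      ring

theorem convexOrder_of_integral_posPart_le (hμ : Integrable id μ) (hν : Integrable id ν)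
    (hmean : ∫ x, x ∂μ = ∫ x, x ∂ν)
    (hk : ∀ k : ℝ, ∫ x, max (x - k) 0 ∂μ ≤ ∫ x, max (x - k) 0 ∂ν) : ConvexOrder μ ν := by
  intro φ hφ hφμ hφν
  obtain ⟨u, hu⟩ := TopologicalSpace.exists_dense_seq ℝ
  have hN : ∀ N, IntegralLE μ ν (tangentSup φ u N) := fun N =>
    integralLE_sup'_rightTangent hφ hμ hν hmean hk _ _
  exact le_of_tendsto_of_tendsto' (hφ.tendsto_integral_tangentSup hu (hN · |>.1) hφμ)
    (hφ.tendsto_integral_tangentSup hu (hN · |>.2.1) hφν) fun N => (hN N).2.2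

end

theorem integral_posPart_le_of_convexOrder {μ ν : Measure ℝ} [IsFiniteMeasure μ]
    [IsFiniteMeasure ν] (hμ : Integrable id μ) (hν : Integrable id ν) (h : ConvexOrder μ ν)
    (k : ℝ) : ∫ x, max (x - k) 0 ∂μ ≤ ∫ x, max (x - k) 0 ∂ν :=
  h _ (((convexOn_id convex_univ).sub (concaveOn_const k convex_univ)).sup
      (convexOn_const 0 convex_univ))
    (hμ.sub (integrable_const k)).pos_part (hν.sub (integrable_const k)).pos_part

theorem stmt1 (F G : Measure ℝ)
    (hFp : IsProbabilityMeasure F) (hGp : IsProbabilityMeasure G)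
    (hFi : Integrable id F) (hGi : Integrable id G)
    (hmean : ∫ x, x ∂F = ∫ x, x ∂G) :
    ConvexOrder G F ↔
      ∀ k : ℝ, ∫ x, max (x - k) 0 ∂G ≤ ∫ x, max (x - k) 0 ∂F :=
  ⟨integral_posPart_le_of_convexOrder hGi hFi,
    convexOrder_of_integral_posPart_le hGi hFi hmean.symm⟩
end

section
/- Let F be a bi-atomic distribution with mean 1 supported on {a, a+b} with b > 0. Then there exist X, Y ~ U[0,1] with X + Y ~ F if and only if 1/b is a positive integer. -/
open MeasureTheory ProbabilityTheory Set

/-!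
When `k * b = 1`, cut `[0, 1)` into the blocks `[j b, (j + 1) b)`. The map `partner a b p`, sending
`x` to `a - x` or to `a + b - x` according as `x` lies in the first `p`-fraction of its block or
not, carries block `j` onto block `k - 1 - j` preserving Lebesgue measure. So `Y := partner a b p X`
is uniform, and `X + Y = a` exactly on a set of measure `k * (p b) = p`.

Conversely, if `k b < 1 < (k + 1) b`, choose a short interval `(α, β)` of residues modulo `b`.
Its translates by `j b` give `k + 1` disjoint intervals inside `[0, 1]`, while those of the
reflected interval `a - (α, β)` meeting `[0, 1]` are only `k`. Since `X + Y ∈ {a, a + b}` forces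
`Y ≡ a - X (mod b)`, `X` in the first set puts `Y` in the second, which has smaller measure.
-/

open scoped ENNReal

lemma unif_zero_one : unif 0 1 = volume.restrict (Icc 0 1) := by
  simp [unif]

lemma ae_eq_or_eq_of_smul_dirac_add {β : Type*} [MeasurableSpace β] [MeasurableSingletonClass β]
    (c d : ℝ≥0∞) (u v : β) : ∀ᵐ x ∂(c • Measure.dirac u + d • Measure.dirac v), x = u ∨ x = v := by
  rw [ae_add_measure_iff]
  exact ⟨Measure.ae_smul_measure (by simp [ae_dirac_eq]) c,
    Measure.ae_smul_measure (by simp [ae_dirac_eq]) d⟩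

lemma map_apply_le_map_apply_of_ae_imp {Ω β : Type*} [MeasurableSpace Ω] [MeasurableSpace β]
    {μ : Measure Ω} {X Y : Ω → β} (hX : Measurable X) (hY : Measurable Y) {A B : Set β}
    (hA : MeasurableSet A) (hB : MeasurableSet B) (h : ∀ᵐ ω ∂μ, X ω ∈ A → Y ω ∈ B) :
    μ.map X A ≤ μ.map Y B := by
  rw [Measure.map_apply hX hA, Measure.map_apply hY hB]
  exact measure_mono_ae h

lemma map_ite_eq_smul_dirac_add {α β : Type*} [MeasurableSpace α] [MeasurableSpace β]
    (μ : Measure α) {P : α → Prop} [DecidablePred P] (hP : MeasurableSet {x | P x}) (u v : β) :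
    μ.map (fun x => if P x then u else v)
      = μ {x | P x} • Measure.dirac u + μ {x | P x}ᶜ • Measure.dirac v := by
  conv_lhs => rw [← μ.restrict_add_restrict_compl hP]
  rw [Measure.map_add _ _ (measurable_const.ite hP measurable_const),
    Measure.map_congr ((ae_restrict_iff' hP).2 (.of_forall fun x (hx : P x) => if_pos hx)),
    Measure.map_congr
      ((ae_restrict_iff' hP.compl).2 (.of_forall fun x (hx : ¬ P x) => if_neg hx)),
    Measure.map_const, Measure.map_const, Measure.restrict_apply_univ, Measure.restrict_apply_univ]

lemma restrict_Ico_eq_sum {μ : Measure ℝ} {f : ℕ → ℝ} (hf : Monotone f) (n : ℕ) :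
    μ.restrict (Ico (f 0) (f n)) = ∑ j ∈ Finset.range n, μ.restrict (Ico (f j) (f (j + 1))) := by
  induction n with
  | zero => simp
  | succ n ih =>
    rw [← Ico_union_Ico_eq_Ico (hf n.zero_le) (hf n.le_succ),
      Measure.restrict_union Ico_disjoint_Ico_same measurableSet_Ico, ih, Finset.sum_range_succ]

lemma map_restrict_Ico_of_eqOn_sub {g : ℝ → ℝ} {d l r : ℝ} (h : EqOn g (d - ·) (Ico l r)) :
    (volume.restrict (Ico l r)).map g = volume.restrict (Ico (d - r) (d - l)) := by
  rw [Measure.map_congr ((ae_restrict_iff' measurableSet_Ico).2 (.of_forall h))]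
  calc (volume.restrict (Ico l r)).map (d - ·)
      = (volume.restrict ((d - ·) ⁻¹' Ioc (d - r) (d - l))).map (d - ·) := by
        rw [preimage_const_sub_Ioc, sub_sub_cancel, sub_sub_cancel]
    _ = (volume.map (d - ·)).restrict (Ioc (d - r) (d - l)) :=
        (Measure.restrict_map (measurable_const_sub d) measurableSet_Ioc).symm
    _ = volume.restrict (Ico (d - r) (d - l)) := by
        rw [(Measure.measurePreserving_sub_left volume d).map_eq]
        exact Measure.restrict_congr_set Ico_ae_eq_Ioc.symm

def periodicIoo (s t b : ℝ) (n : ℕ) : Set ℝ :=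
  ⋃ j ∈ Finset.range n, Ioo (s + j * b) (t + j * b)

lemma mem_periodicIoo {s t b x : ℝ} {n : ℕ} :
    x ∈ periodicIoo s t b n ↔ ∃ j < n, x ∈ Ioo (s + j * b) (t + j * b) := by
  simp only [periodicIoo, mem_iUnion, Finset.mem_range, exists_prop]

lemma measurableSet_periodicIoo (s t b : ℝ) (n : ℕ) : MeasurableSet (periodicIoo s t b n) :=
  Finset.measurableSet_biUnion _ fun _ _ => measurableSet_Ioo

lemma volume_periodicIoo {s t b : ℝ} (n : ℕ) (hb : 0 ≤ b) (hst : t - s ≤ b) :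
    volume (periodicIoo s t b n) = n * ENNReal.ofReal (t - s) := by
  have hdisj : (Finset.range n : Set ℕ).PairwiseDisjoint
      fun j : ℕ => Ioo (s + j * b) (t + j * b) := by
    refine ((pairwise_disjoint_on _).2 fun i j hij => ?_).set_pairwise _
    refine Set.disjoint_left.2 fun x hi hj => ?_
    have : (i : ℝ) + 1 ≤ j := by exact_mod_cast hij
    nlinarith [hi.2, hj.1]
  rw [periodicIoo, measure_biUnion_finset hdisj fun _ _ => measurableSet_Ioo]
  simp [Real.volume_Ioo]

lemma sub_mem_periodicIoo {a b α β x y : ℝ} {k : ℕ} (hα : a - k * b ≤ α) (hβ : β ≤ a + b - 1)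
    (hy : y ∈ Icc (0 : ℝ) 1) (hxy : x + y = a ∨ x + y = a + b)
    (hx : x ∈ periodicIoo α β b (k + 1)) : a - y ∈ periodicIoo α β b k := by
  obtain ⟨j, hj, hxj⟩ := mem_periodicIoo.1 hx
  rw [mem_periodicIoo]
  rcases hxy with hxy | hxy
  · refine ⟨j, lt_of_le_of_ne (Nat.lt_succ_iff.1 hj) ?_, by rwa [← hxy, add_sub_cancel_right]⟩
    rintro rfl
    linarith [hxj.1, hy.1]
  · obtain ⟨i, rfl⟩ : ∃ i, j = i + 1 := Nat.exists_eq_succ_of_ne_zero <| by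
      rintro rfl
      simp only [Nat.cast_zero, zero_mul, add_zero] at hxj
      linarith [hxj.2, hy.2]
    refine ⟨i, by omega, ?_⟩
    push_cast at hxj
    constructor <;> linarith [hxj.1, hxj.2]

theorem exists_nat_mul_eq_one_of_ae_add {Ω : Type*} [MeasurableSpace Ω] {μ : Measure Ω}
    {X Y : Ω → ℝ} {a b : ℝ} (hX : Measurable X) (hY : Measurable Y)
    (hXlaw : μ.map X = volume.restrict (Icc 0 1)) (hYlaw : μ.map Y = volume.restrict (Icc 0 1))
    (hsum : ∀ᵐ ω ∂μ, X ω + Y ω = a ∨ X ω + Y ω = a + b) (hb : 0 < b) (ha₀ : 1 - b < a)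
    (ha₁ : a < 1) : ∃ k : ℕ, (k : ℝ) * b = 1 := by
  by_contra! hne
  set k := ⌊1 / b⌋₊
  have hk : (k : ℝ) * b < 1 := by
    refine lt_of_le_of_ne ?_ (hne k)
    simpa only [le_div_iff₀ hb] using Nat.floor_le (one_div_pos.2 hb).le
  have hk' : 1 < ((k : ℝ) + 1) * b := by
    simpa only [div_lt_iff₀ hb] using Nat.lt_floor_add_one (1 / b)
  -- `0 ≤ α` and `β ≤ 1 - k b` keep all `k + 1` translates inside `[0, 1]`; the other two bounds
  -- are those of `sub_mem_periodicIoo`.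
  set α := max 0 (a - k * b)
  set β := min (1 - k * b) (a + b - 1)
  have hαβ : α < β :=
    max_lt (lt_min (by linarith) (by linarith)) (lt_min (by linarith) (by linarith))
  have hβα : β - α ≤ b := by
    linarith [le_max_left 0 (a - k * b), min_le_right (1 - k * b) (a + b - 1)]
  set A := periodicIoo α β b (k + 1)
  set B := (a - ·) ⁻¹' periodicIoo α β b k
  have hA : A ⊆ Icc 0 1 := by
    intro x hx
    obtain ⟨j, hj, hxj⟩ := mem_periodicIoo.1 hx
    have : (j : ℝ) * b ≤ k * b := by gcongr; exact_mod_cast Nat.lt_succ_iff.1 hj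
    have : (0 : ℝ) ≤ j * b := by positivity
    constructor <;>
      linarith [hxj.1, hxj.2, le_max_left 0 (a - k * b), min_le_left (1 - k * b) (a + b - 1)]
  have hAB : ∀ᵐ ω ∂μ, X ω ∈ A → Y ω ∈ B := by
    have hY01 : ∀ᵐ ω ∂μ, Y ω ∈ Icc (0 : ℝ) 1 :=
      ae_of_ae_map hY.aemeasurable (hYlaw ▸ ae_restrict_mem measurableSet_Icc)
    filter_upwards [hsum, hY01] with ω hω hω01
    exact sub_mem_periodicIoo (le_max_right _ _) (min_le_right _ _) hω01 hω
  have hle := map_apply_le_map_apply_of_ae_imp hX hY (measurableSet_periodicIoo _ _ _ _)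
    ((measurableSet_periodicIoo _ _ _ _).preimage (measurable_const_sub a)) hAB
  rw [hXlaw, hYlaw, Measure.restrict_apply (measurableSet_periodicIoo _ _ _ _),
    inter_eq_left.2 hA] at hle
  have hB : volume B = volume (periodicIoo α β b k) :=
    (Measure.measurePreserving_sub_left volume a).measure_preimage
      (measurableSet_periodicIoo _ _ _ _).nullMeasurableSet
  have hvol := hle.trans (Measure.restrict_apply_le _ _)
  rw [hB, volume_periodicIoo _ hb.le hβα, volume_periodicIoo _ hb.le hβα,
    ENNReal.mul_le_mul_iff_left (by simpa using hαβ) ENNReal.ofReal_ne_top] at hvol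
  exact absurd (by exact_mod_cast hvol : k + 1 ≤ k) (by omega)

noncomputable def partner (a b p x : ℝ) : ℝ :=
  if Int.fract (x / b) < p then a - x else a + b - x

lemma measurableSet_fract_div_lt (b p : ℝ) : MeasurableSet {x : ℝ | Int.fract (x / b) < p} :=
  measurableSet_lt (measurable_fract.comp (measurable_id.div_const b)) measurable_const

lemma measurable_partner (a b p : ℝ) : Measurable (partner a b p) :=
  (measurable_const_sub a).ite (measurableSet_fract_div_lt b p) (measurable_const_sub (a + b))

lemma fract_div_lt_iff {b p x : ℝ} {j : ℕ} (hb : 0 < b) (hx : x ∈ Ico (j * b) ((j + 1) * b)) :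
    Int.fract (x / b) < p ↔ x < j * b + p * b := by
  have hfloor : ⌊x / b⌋ = j := by
    rw [Int.floor_eq_iff, le_div_iff₀ hb, div_lt_iff₀ hb]
    exact_mod_cast hx
  rw [Int.fract, hfloor, Int.cast_natCast, sub_lt_iff_lt_add', div_lt_iff₀ hb, add_mul]

lemma map_partner_restrict_Ico {a b p m : ℝ} {j : ℕ} (hb : 0 < b) (hp₀ : 0 ≤ p) (hp₁ : p ≤ 1)
    (ha : a = (m + j) * b + p * b) :
    (volume.restrict (Ico (j * b) ((j + 1) * b))).map (partner a b p)
      = volume.restrict (Ico (m * b) ((m + 1) * b)) := by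
  have hsplit (l : ℝ) : Ico (l * b) ((l + 1) * b)
      = Ico (l * b) (l * b + p * b) ∪ Ico (l * b + p * b) ((l + 1) * b) :=
    (Ico_union_Ico_eq_Ico (by nlinarith) (by nlinarith)).symm
  rw [hsplit, hsplit, Measure.restrict_union Ico_disjoint_Ico_same measurableSet_Ico,
    Measure.restrict_union Ico_disjoint_Ico_same measurableSet_Ico,
    Measure.map_add _ _ (measurable_partner a b p)]
  congr 1
  · rw [map_restrict_Ico_of_eqOn_sub (d := a)]
    · congr 2 <;> rw [ha] <;> ring
    · intro x hx
      have hx' : x ∈ Ico (j * b) ((j + 1) * b) := ⟨hx.1, by nlinarith [hx.2]⟩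
      simp [partner, (fract_div_lt_iff hb hx').2 hx.2]
  · rw [map_restrict_Ico_of_eqOn_sub (d := a + b)]
    · congr 2 <;> rw [ha] <;> ring
    · intro x hx
      have hx' : x ∈ Ico (j * b) ((j + 1) * b) := ⟨by nlinarith [hx.1], hx.2⟩
      simp [partner, (fract_div_lt_iff hb hx').not.2 (not_lt.2 hx.1)]

lemma restrict_Ico_zero_one_eq_sum {b : ℝ} {k : ℕ} (hb : 0 < b) (hkb : k * b = 1) :
    volume.restrict (Ico (0 : ℝ) 1)
      = ∑ j ∈ Finset.range k, volume.restrict (Ico (j * b) ((j + 1) * b)) := by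
  have := restrict_Ico_eq_sum (μ := volume) (f := fun j : ℕ => j * b)
    (fun i j hij => by dsimp only; gcongr) k
  simpa only [Nat.cast_zero, zero_mul, hkb, Nat.cast_succ] using this

lemma map_partner_restrict_Ico_zero_one {a b p : ℝ} {k : ℕ} (hb : 0 < b) (hp₀ : 0 ≤ p)
    (hp₁ : p ≤ 1) (hkb : k * b = 1) (ha : a = 1 - b + p * b) :
    (volume.restrict (Ico (0 : ℝ) 1)).map (partner a b p) = volume.restrict (Ico 0 1) := by
  rw [restrict_Ico_zero_one_eq_sum hb hkb,
    ← Measure.mapₗ_apply_of_measurable (measurable_partner a b p), map_sum]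
  rw [← Finset.sum_range_reflect]
  refine Finset.sum_congr rfl fun j hj => ?_
  rw [Measure.mapₗ_apply_of_measurable (measurable_partner a b p)]
  refine map_partner_restrict_Ico hb hp₀ hp₁ ?_
  have : (↑(k - 1 - j) : ℝ) = k - 1 - j := by
    rw [Nat.sub_sub, Nat.cast_sub (by have := Finset.mem_range.1 hj; omega)]
    push_cast
    ring
  rw [this]
  linear_combination ha - hkb

lemma restrict_Ico_zero_one_fract_div_lt {b p : ℝ} {k : ℕ} (hb : 0 < b) (hp₁ : p ≤ 1)
    (hkb : k * b = 1) :
    volume.restrict (Ico (0 : ℝ) 1) {x | Int.fract (x / b) < p} = ENNReal.ofReal p := by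
  have hblock (j : ℕ) : Ico (j * b) ((j + 1) * b) ∩ {x | Int.fract (x / b) < p}
      = Ico (j * b) (j * b + p * b) := by
    ext x
    simp only [mem_inter_iff, mem_ofPred_eq, mem_Ico]
    constructor
    · rintro ⟨hx, hxp⟩
      exact ⟨hx.1, (fract_div_lt_iff hb hx).1 hxp⟩
    · rintro hx
      have hx' : x ∈ Ico (j * b) ((j + 1) * b) := ⟨hx.1, by nlinarith [hx.2]⟩
      exact ⟨hx', (fract_div_lt_iff hb hx').2 hx.2⟩
  rw [restrict_Ico_zero_one_eq_sum hb hkb, Measure.coe_finsetSum, Finset.sum_apply]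
  simp only [Measure.restrict_apply (measurableSet_fract_div_lt b p), inter_comm _ (Ico _ _),
    hblock, Real.volume_Ico, add_sub_cancel_left, Finset.sum_const, Finset.card_range,
    nsmul_eq_mul]
  rw [← ENNReal.ofReal_natCast, ← ENNReal.ofReal_mul (by positivity)]
  congr 1
  linear_combination p * hkb

theorem isSumDist_of_nat_mul_eq_one {a b p : ℝ} {k : ℕ} (hb : 0 < b) (hp₀ : 0 ≤ p) (hp₁ : p ≤ 1)
    (hkb : k * b = 1) (ha : a = 1 - b + p * b) :
    IsSumDist (unif 0 1) (unif 0 1)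
      (ENNReal.ofReal p • Measure.dirac a + ENNReal.ofReal (1 - p) • Measure.dirac (a + b)) := by
  set μ := volume.restrict (Ico (0 : ℝ) 1)
  have hμ : unif 0 1 = μ := unif_zero_one.trans (Measure.restrict_congr_set Ico_ae_eq_Icc).symm
  have hprob : IsProbabilityMeasure μ := ⟨by simp [μ]⟩
  have hS := restrict_Ico_zero_one_fract_div_lt hb hp₁ hkb
  have hSc : μ {x | Int.fract (x / b) < p}ᶜ = ENNReal.ofReal (1 - p) := by
    rw [prob_compl_eq_one_sub (measurableSet_fract_div_lt b p), hS, ENNReal.ofReal_sub _ hp₀,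
      ENNReal.ofReal_one]
  have hsum : (fun x => x + partner a b p x)
      = fun x => if Int.fract (x / b) < p then a else a + b := by
    funext x
    unfold partner
    split_ifs <;> ring
  refine ⟨ℝ, ⟨μ⟩, hprob, id, partner a b p, measurable_id, measurable_partner a b p,
    by rw [Measure.map_id, hμ]; rfl, ?_, ?_⟩
  · rw [hμ]
    exact map_partner_restrict_Ico_zero_one hb hp₀ hp₁ hkb ha
  · rw [show (fun ω => id ω + partner a b p ω) = _ from hsum]
    exact (map_ite_eq_smul_dirac_add μ (measurableSet_fract_div_lt b p) a (a + b)).trans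
      (by rw [hS, hSc])

theorem stmt6 (a b p : ℝ) (hb : 0 < b) (hp : 0 < p) (hp1 : p < 1)
    (F : Measure ℝ)
    (hF : F = ENNReal.ofReal p • Measure.dirac a
            + ENNReal.ofReal (1 - p) • Measure.dirac (a + b))
    (hmean : p * a + (1 - p) * (a + b) = 1) :
    IsSumDist (unif 0 1) (unif 0 1) F ↔ ∃ k : ℕ, 0 < k ∧ 1 / b = (k : ℝ) := by
  have ha : a = 1 - b + p * b := by linear_combination hmean
  subst hF
  constructor
  · rintro ⟨Ω, _, -, X, Y, hX, hY, hXlaw, hYlaw, hlaw⟩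
    rw [unif_zero_one] at hXlaw hYlaw
    have hsum : ∀ᵐ ω, X ω + Y ω = a ∨ X ω + Y ω = a + b :=
      ae_of_ae_map (hX.add hY).aemeasurable (hlaw ▸ ae_eq_or_eq_of_smul_dirac_add _ _ a (a + b))
    obtain ⟨k, hk⟩ := exists_nat_mul_eq_one_of_ae_add hX hY hXlaw hYlaw hsum hb
      (by nlinarith) (by nlinarith)
    refine ⟨k, Nat.pos_of_ne_zero ?_, ?_⟩
    · rintro rfl
      simp at hk
    · rw [← hk]
      field_simp
  · rintro ⟨k, -, hk⟩
    refine isSumDist_of_nat_mul_eq_one (k := k) hb hp.le hp1.le ?_ ha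
    rw [← hk]
    field_simp
end

section
/- Let Z be a random variable with distribution supported in {b−k, b−k+1, ..., b} (integer-spaced atoms), k ∈ ℕ, b ∈ ℝ, with mean 0. If there exist X ~ U[0,T] and Y ~ U[−T,0] (T > 0) with Z = X + Y almost surely, then at least one of b and T is an integer. -/
open MeasureTheory ProbabilityTheory Set

/-! The character `x ↦ exp (2πix)` has period `1`, so `X ≡ b - Y (mod 1)` gives
`φ_X(2π) = exp(2πib) · φ_Y(-2π)` for the characteristic functions. For `X ~ U[0,T]` and
`Y ~ U[-T,0]` both sides involve the same value `(exp(2πiT) - 1) / (2πiT)`, which vanishes only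
when `T ∈ ℤ`; otherwise it cancels and leaves `exp(2πib) = 1`, i.e. `b ∈ ℤ`. -/

open Real Complex

lemma exists_int_eq_of_cexp_two_pi_mul_I_eq_one {x : ℝ} (h : cexp (2 * π * x * I) = 1) :
    ∃ m : ℤ, x = m := by
  obtain ⟨m, hm⟩ := Complex.exp_eq_one_iff.1 h
  refine ⟨m, ?_⟩
  have : (x : ℂ) = m := mul_left_cancel₀ two_pi_I_ne_zero (by linear_combination hm)
  exact_mod_cast this

lemma charFun_unif {a b t : ℝ} (hab : a < b) (ht : t ≠ 0) :
    charFun (unif a b) t = (cexp (t * b * I) - cexp (t * a * I)) / ((b - a) * (t * I)) := by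
  have htI : (t : ℂ) * I ≠ 0 := mul_ne_zero (ofReal_ne_zero.2 ht) I_ne_zero
  have hcomm : ∀ x : ℝ, cexp (t * x * I) = cexp (t * I * x) := fun x => by ring_nf
  simp_rw [charFun_apply_real, unif, hcomm]
  rw [integral_smul_measure, ENNReal.toReal_inv, ENNReal.toReal_ofReal (sub_nonneg.2 hab.le),
    integral_Icc_eq_integral_Ioc, ← intervalIntegral.integral_of_le hab.le,
    integral_exp_mul_complex htI, real_smul]
  push_cast
  rw [inv_mul_eq_div, div_div, mul_comm _ ((b : ℂ) - a)]

lemma charFun_unif_neg {a b t : ℝ} (hab : a < b) (ht : t ≠ 0) :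
    charFun (unif (-b) (-a)) (-t) = charFun (unif a b) t := by
  rw [charFun_unif (neg_lt_neg hab) (neg_ne_zero.2 ht), charFun_unif hab ht]
  push_cast
  rw [← neg_div_neg_eq]
  ring_nf

lemma exists_int_eq_of_charFun_unif_eq_zero {T : ℝ} (hT : 0 < T)
    (h : charFun (unif 0 T) (2 * π) = 0) : ∃ m : ℤ, T = m := by
  rw [charFun_unif hT (by positivity)] at h
  refine exists_int_eq_of_cexp_two_pi_mul_I_eq_one ?_
  simpa [sub_eq_zero, hT.ne', Real.pi_ne_zero, I_ne_zero] using h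

lemma charFun_map_two_pi_eq_of_add_mem_add_int {Ω : Type*} [MeasurableSpace Ω] {μ : Measure Ω}
    {X Y : Ω → ℝ} (hX : AEMeasurable X μ) (hY : AEMeasurable Y μ) {b : ℝ}
    (h : ∀ᵐ ω ∂μ, ∃ n : ℤ, X ω + Y ω = b + n) :
    charFun (μ.map X) (2 * π) = cexp (2 * π * b * I) * charFun (μ.map Y) (-(2 * π)) := by
  have hcont : ∀ t : ℝ, Continuous fun x : ℝ => cexp (t * x * I) := fun t => by fun_prop
  rw [charFun_apply_real, charFun_apply_real, integral_map hX (hcont _).aestronglyMeasurable,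
    integral_map hY (hcont _).aestronglyMeasurable, ← integral_const_mul]
  refine integral_congr_ae (h.mono fun ω ⟨n, hn⟩ => ?_)
  have hXω : 2 * π * X ω * I = 2 * π * b * I + -(2 * π) * Y ω * I + n * (2 * π * I) := by
    rw [eq_sub_of_add_eq hn]; push_cast; ring
  simp only [ofReal_mul, ofReal_neg, ofReal_ofNat]
  rw [hXω, Complex.exp_add, exp_int_mul_two_pi_mul_I, mul_one, Complex.exp_add]

theorem stmt10_general (k : ℕ) (b T : ℝ) (hT : 0 < T)
    (Ω : Type) [MeasureSpace Ω]
    (X Y Z : Ω → ℝ) (hX : Measurable X) (hY : Measurable Y)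
    (hXd : Measure.map X ℙ = unif 0 T) (hYd : Measure.map Y ℙ = unif (-T) 0)
    (hZ : ∀ᵐ ω ∂ℙ, Z ω = X ω + Y ω)
    (hsupp : ∀ᵐ ω ∂ℙ, ∃ i : ℕ, i ≤ k ∧ Z ω = b - (i : ℝ)) :
    (∃ m : ℤ, b = (m : ℝ)) ∨ (∃ m : ℤ, T = (m : ℝ)) := by
  refine or_iff_not_imp_right.2 fun hTint => ?_
  have hsum : ∀ᵐ ω ∂ℙ, ∃ n : ℤ, X ω + Y ω = b + n := by
    filter_upwards [hZ, hsupp] with ω hZω hi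
    obtain ⟨i, -, hi⟩ := hi
    exact ⟨-i, by push_cast; linarith⟩
  have key := charFun_map_two_pi_eq_of_add_mem_add_int hX.aemeasurable hY.aemeasurable hsum
  have hsymm : charFun (unif (-T) 0) (-(2 * π)) = charFun (unif 0 T) (2 * π) := by
    simpa only [neg_zero] using charFun_unif_neg hT two_pi_pos.ne'
  rw [hXd, hYd, hsymm] at key
  have hne : charFun (unif 0 T) (2 * π) ≠ 0 :=
    fun h0 => hTint (exists_int_eq_of_charFun_unif_eq_zero hT h0)
  exact exists_int_eq_of_cexp_two_pi_mul_I_eq_one ((mul_eq_right₀ hne).1 key.symm)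

theorem stmt10 (k : ℕ) (b T : ℝ) (hT : 0 < T)
    (Ω : Type) [MeasureSpace Ω] [IsProbabilityMeasure (ℙ : Measure Ω)]
    (X Y Z : Ω → ℝ) (hX : Measurable X) (hY : Measurable Y)
    (hXd : Measure.map X ℙ = unif 0 T) (hYd : Measure.map Y ℙ = unif (-T) 0)
    (hZ : ∀ᵐ ω ∂ℙ, Z ω = X ω + Y ω)
    (hsupp : ∀ᵐ ω ∂ℙ, ∃ i : ℕ, i ≤ k ∧ Z ω = b - (i : ℝ))
    (hmean : ∫ ω, Z ω ∂ℙ = 0) :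
    (∃ m : ℤ, b = (m : ℝ)) ∨ (∃ m : ℤ, T = (m : ℝ)) :=
  stmt10_general k b T hT Ω X Y Z hX hY hXd hYd hZ hsupp
end
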